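/- Let G be a connected finite simple graph with nonnegative edge weights w, let C be a cycle of G, let x ∈ V(C), and let s be a vertex such that 0 < dist_G(s, x) ≤ max_{v ∈ V(C)} dist_C(x, v), where dist_C(x, v) denotes the minimum of the weights of the two arcs into which x and v divide C. Then there exist a vertex y ∈ V(C) and two walks from s to y in G with distinct edge sets, each of weight at most w(C). -/

import Mathlib

/-- The weight of a walk: the sum of the weights of its edges (with multiplicity). -/
noncomputable def walkWeight {V : Type*} {G : SimpleGraph V} (w : Sym2 V → ℝ) {u v : V}
    (p : G.Walk u v) : ℝ := (p.edges.map w).sum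

/-- The weighted distance between two vertices: the infimum of the weights of paths
between them. -/
noncomputable def gdist {V : Type*} (G : SimpleGraph V) (w : Sym2 V → ℝ) (u v : V) : ℝ :=
  sInf {x : ℝ | ∃ p : G.Walk u v, p.IsPath ∧ walkWeight w p = x}

/-- The distance along a cycle `C` between two of its vertices `x` and `v`: the minimum of
the weights of the two arcs into which `x` and `v` divide `C` (and `0` if `x = v`). -/
noncomputable def cycDist {V : Type*} [DecidableEq V] {G : SimpleGraph V}
    (w : Sym2 V → ℝ) {u : V} (C : G.Walk u u) (x v : V) : ℝ :=
  if x = v then 0 else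
    sInf {d : ℝ | ∃ (P₁ P₂ : G.Walk x v), P₁.IsPath ∧ P₂.IsPath ∧
      (∀ e, e ∈ C.edges ↔ (e ∈ P₁.edges ∨ e ∈ P₂.edges)) ∧
      (∀ e, ¬ (e ∈ P₁.edges ∧ e ∈ P₂.edges)) ∧
      d = min (walkWeight w P₁) (walkWeight w P₂)}

lemma walkWeight_nonneg {V : Type*} {G : SimpleGraph V} {w : Sym2 V → ℝ}
    (hw : ∀ e ∈ G.edgeSet, 0 ≤ w e) {u v : V} (p : G.Walk u v) :
    0 ≤ walkWeight w p := by
  apply List.sum_nonneg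
  intro a ha
  obtain ⟨e, he, rfl⟩ := List.mem_map.mp ha
  exact hw e (p.edges_subset_edgeSet he)

lemma walkWeight_append {V : Type*} {G : SimpleGraph V} (w : Sym2 V → ℝ) {u v t : V}
    (p : G.Walk u v) (q : G.Walk v t) :
    walkWeight w (p.append q) = walkWeight w p + walkWeight w q := by
  simp [walkWeight, SimpleGraph.Walk.edges_append]

/-- A cycle through `x` and `v` (with `x ≠ v`) splits into two edge-disjoint paths from
`x` to `v` whose weights add up to the weight of the cycle. -/
lemma cycle_split {V : Type*} [DecidableEq V] {G : SimpleGraph V} (w : Sym2 V → ℝ)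
    {u : V} {C : G.Walk u u} (hC : C.IsCycle) {x v : V}
    (hx : x ∈ C.support) (hv : v ∈ C.support) (hne : x ≠ v) :
    ∃ (P₁ P₂ : G.Walk x v), P₁.IsPath ∧ P₂.IsPath ∧
      (∀ e, e ∈ C.edges ↔ (e ∈ P₁.edges ∨ e ∈ P₂.edges)) ∧
      (∀ e, ¬ (e ∈ P₁.edges ∧ e ∈ P₂.edges)) ∧
      walkWeight w P₁ + walkWeight w P₂ = walkWeight w C := by
  classical
  set c : G.Walk x x := C.rotate x hx with hcdef
  have hc : c.IsCycle := hC.rotate hx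
  have hv' : v ∈ c.support := by
    have h1 : v ∈ ((C.takeUntil x hx).append (C.dropUntil x hx)).support := by
      rw [C.take_spec hx]; exact hv
    rw [SimpleGraph.Walk.mem_support_append_iff] at h1
    show v ∈ ((C.dropUntil x hx).append (C.takeUntil x hx)).support
    rw [SimpleGraph.Walk.mem_support_append_iff]
    tauto
  set A : G.Walk x v := c.takeUntil v hv' with hAdef
  set D : G.Walk v x := c.dropUntil v hv' with hDdef
  have hspec : A.append D = c := c.take_spec hv'
  have hsup : c.support = A.support ++ D.support.tail := by
    rw [← hspec, SimpleGraph.Walk.support_append]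
  have htail : c.support.tail = A.support.tail ++ D.support.tail := by
    rw [hsup, A.support_eq_cons]; rfl
  have hnodup : (A.support.tail ++ D.support.tail).Nodup := by
    rw [← htail]; exact hc.support_nodup
  obtain ⟨hnA, hnD, hdisj⟩ := List.nodup_append'.mp hnodup
  have hxD : x ∈ D.support.tail := by
    have h0 := D.end_mem_support
    rw [D.support_eq_cons] at h0
    rcases List.mem_cons.mp h0 with h | h
    · exact absurd h hne
    · exact h
  have hvA : v ∈ A.support.tail := by
    have h0 := A.end_mem_support
    rw [A.support_eq_cons] at h0
    rcases List.mem_cons.mp h0 with h | h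
    · exact absurd h hne.symm
    · exact h
  have hApath : A.IsPath := by
    rw [SimpleGraph.Walk.isPath_def, A.support_eq_cons, List.nodup_cons]
    exact ⟨fun hxt => hdisj hxt hxD, hnA⟩
  have hDpath : D.IsPath := by
    rw [SimpleGraph.Walk.isPath_def, D.support_eq_cons, List.nodup_cons]
    exact ⟨fun hvt => hdisj hvA hvt, hnD⟩
  have hE : c.edges = A.edges ++ D.edges := by
    rw [← hspec, SimpleGraph.Walk.edges_append]
  have hperm : c.edges.Perm C.edges := (C.rotate_edges x hx).perm
  have hcnodup : c.edges.Nodup := hc.isTrail.edges_nodup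
  have hedisj : List.Disjoint A.edges D.edges := by
    rw [hE] at hcnodup
    exact (List.nodup_append'.mp hcnodup).2.2
  refine ⟨A, D.reverse, hApath, hDpath.reverse, ?_, ?_, ?_⟩
  · intro e
    rw [← hperm.mem_iff, hE, List.mem_append, SimpleGraph.Walk.edges_reverse,
      List.mem_reverse]
  · intro e ⟨h1, h2⟩
    rw [SimpleGraph.Walk.edges_reverse, List.mem_reverse] at h2
    exact hedisj h1 h2
  · have h2 : walkWeight w D.reverse = walkWeight w D := by
      simp [walkWeight, SimpleGraph.Walk.edges_reverse, List.map_reverse, List.sum_reverse]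
    rw [h2]
    have : walkWeight w c = walkWeight w C := by
      unfold walkWeight
      exact (hperm.map w).sum_eq
    rw [← this, ← walkWeight_append, hspec]

/-- Let `C` be a cycle of a connected finite simple graph with nonnegative edge weights, let
`x ∈ V(C)`, and let `s` be a vertex with `0 < dist_G(s, x) ≤ max_{v ∈ V(C)} dist_C(x, v)`.
Then there exist a vertex `y ∈ V(C)` and two walks from `s` to `y` with distinct edge sets,
each of weight at most `w(C)`. -/
theorem stmt6 {V : Type*} [Fintype V] [DecidableEq V] (G : SimpleGraph V)
    (hG : G.Connected) (w : Sym2 V → ℝ) (hw : ∀ e ∈ G.edgeSet, 0 ≤ w e)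
    (u : V) (C : G.Walk u u) (hC : C.IsCycle)
    (x : V) (hx : x ∈ C.support) (s : V)
    (hpos : 0 < gdist G w s x)
    (hle : gdist G w s x ≤ sSup {d : ℝ | ∃ v ∈ C.support, cycDist w C x v = d}) :
    ∃ y ∈ C.support, ∃ (W₁ W₂ : G.Walk s y),
      W₁.edges.toFinset ≠ W₂.edges.toFinset ∧
      walkWeight w W₁ ≤ walkWeight w C ∧ walkWeight w W₂ ≤ walkWeight w C := by
  classical
  -- the set of path weights from s to x is finite and nonempty; gdist is attained
  have hDset : {r : ℝ | ∃ p : G.Walk s x, p.IsPath ∧ walkWeight w p = r} =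
      (fun p : G.Walk s x => walkWeight w p) '' {p : G.Walk s x | p.IsPath} := by
    ext r
    constructor
    · rintro ⟨p, h1, h2⟩; exact ⟨p, h1, h2⟩
    · rintro ⟨p, h1, h2⟩; exact ⟨p, h1, h2⟩
  haveI : DecidableRel G.Adj := Classical.decRel _
  have hPfin : ({p : G.Walk s x | p.IsPath}).Finite := by
    have : {p : G.Walk s x | p.IsPath} ⊆
        {p : G.Walk s x | p.IsPath ∧ p.length < Fintype.card V} := by
      intro p hp; exact ⟨hp, hp.length_lt⟩
    exact Set.Finite.subset (Set.toFinite _) this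
  have hfin : ({r : ℝ | ∃ p : G.Walk s x, p.IsPath ∧ walkWeight w p = r}).Finite := by
    rw [hDset]; exact hPfin.image _
  have hne : ({r : ℝ | ∃ p : G.Walk s x, p.IsPath ∧ walkWeight w p = r}).Nonempty := by
    obtain ⟨q⟩ := hG s x
    exact ⟨walkWeight w q.bypass, q.bypass, q.bypass_isPath, rfl⟩
  have hmem := hne.csInf_mem hfin
  obtain ⟨P, hPpath, hPweight⟩ := hmem
  -- the sSup is attained at some v* ∈ C.support
  have hSset : {d : ℝ | ∃ v ∈ C.support, cycDist w C x v = d} =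
      (fun v => cycDist w C x v) '' {v | v ∈ C.support} := by
    ext d; simp [Set.mem_image]
  have hSfin : ({d : ℝ | ∃ v ∈ C.support, cycDist w C x v = d}).Finite := by
    rw [hSset]; exact (Set.toFinite _).image _
  have hSne : ({d : ℝ | ∃ v ∈ C.support, cycDist w C x v = d}).Nonempty :=
    ⟨cycDist w C x x, x, hx, rfl⟩
  obtain ⟨v, hvC, hveq⟩ := hSne.csSup_mem hSfin
  -- x ≠ v since cycDist x v ≥ gdist > 0
  have hgd : gdist G w s x ≤ cycDist w C x v := hveq ▸ hle
  have hxv : x ≠ v := by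
    rintro rfl
    rw [cycDist, if_pos rfl] at hgd
    linarith
  -- get the two arcs
  obtain ⟨A₁, A₂, hA₁, hA₂, hiff, hdisj, hsum⟩ := cycle_split w hC hx hvC hxv
  -- gdist ≤ min of the arc weights
  have hSmem : min (walkWeight w A₁) (walkWeight w A₂) ∈
      {d : ℝ | ∃ (P₁ P₂ : G.Walk x v), P₁.IsPath ∧ P₂.IsPath ∧
        (∀ e, e ∈ C.edges ↔ (e ∈ P₁.edges ∨ e ∈ P₂.edges)) ∧
        (∀ e, ¬ (e ∈ P₁.edges ∧ e ∈ P₂.edges)) ∧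
        d = min (walkWeight w P₁) (walkWeight w P₂)} :=
    ⟨A₁, A₂, hA₁, hA₂, hiff, hdisj, rfl⟩
  have hbdd : BddBelow {d : ℝ | ∃ (P₁ P₂ : G.Walk x v), P₁.IsPath ∧ P₂.IsPath ∧
        (∀ e, e ∈ C.edges ↔ (e ∈ P₁.edges ∨ e ∈ P₂.edges)) ∧
        (∀ e, ¬ (e ∈ P₁.edges ∧ e ∈ P₂.edges)) ∧
        d = min (walkWeight w P₁) (walkWeight w P₂)} := by
    refine ⟨0, ?_⟩
    rintro d ⟨P₁, P₂, _, _, _, _, rfl⟩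
    exact le_min (walkWeight_nonneg hw P₁) (walkWeight_nonneg hw P₂)
  have hcd : cycDist w C x v = sInf {d : ℝ | ∃ (P₁ P₂ : G.Walk x v), P₁.IsPath ∧ P₂.IsPath ∧
        (∀ e, e ∈ C.edges ↔ (e ∈ P₁.edges ∨ e ∈ P₂.edges)) ∧
        (∀ e, ¬ (e ∈ P₁.edges ∧ e ∈ P₂.edges)) ∧
        d = min (walkWeight w P₁) (walkWeight w P₂)} := by
    rw [cycDist, if_neg hxv]
  have hPle : walkWeight w P ≤ min (walkWeight w A₁) (walkWeight w A₂) := by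
    rw [hPweight]
    calc gdist G w s x ≤ cycDist w C x v := hgd
      _ ≤ _ := by rw [hcd]; exact csInf_le hbdd hSmem
  -- the two walks
  refine ⟨v, hvC, P.append A₁, P.append A₂, ?_, ?_, ?_⟩
  · -- distinct edge sets
    intro heq
    have hsub : ∀ e ∈ C.edges, e ∈ P.edges := by
      intro e he
      rcases (hiff e).mp he with h1 | h2
      · have : e ∈ (P.append A₂).edges.toFinset := by
          rw [← heq, List.mem_toFinset, SimpleGraph.Walk.edges_append, List.mem_append]
          right; exact h1
        rw [List.mem_toFinset, SimpleGraph.Walk.edges_append, List.mem_append] at this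
        rcases this with h | h
        · exact h
        · exact absurd ⟨h1, h⟩ (hdisj e)
      · have : e ∈ (P.append A₁).edges.toFinset := by
          rw [heq, List.mem_toFinset, SimpleGraph.Walk.edges_append, List.mem_append]
          right; exact h2
        rw [List.mem_toFinset, SimpleGraph.Walk.edges_append, List.mem_append] at this
        rcases this with h | h
        · exact h
        · exact absurd ⟨h, h2⟩ (hdisj e)
    -- then walkWeight C ≤ walkWeight P, contradiction
    have hCP : walkWeight w C ≤ walkWeight w P := by
      unfold walkWeight
      rw [← List.sum_toFinset _ hC.isTrail.edges_nodup,
        ← List.sum_toFinset _ hPpath.isTrail.edges_nodup]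
      apply Finset.sum_le_sum_of_subset_of_nonneg
      · intro e he
        rw [List.mem_toFinset] at he ⊢
        exact hsub e he
      · intro e he _
        exact hw e (P.edges_subset_edgeSet (List.mem_toFinset.mp he))
    have h1 : walkWeight w P ≤ walkWeight w A₁ := le_trans hPle (min_le_left _ _)
    have h2 : walkWeight w P ≤ walkWeight w A₂ := le_trans hPle (min_le_right _ _)
    have h0 : 0 < walkWeight w P := hPweight ▸ hpos
    linarith [hsum]
  · rw [walkWeight_append, ← hsum]
    have h2 : walkWeight w P ≤ walkWeight w A₂ := le_trans hPle (min_le_right _ _)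
    linarith
  · rw [walkWeight_append, ← hsum]
    have h1 : walkWeight w P ≤ walkWeight w A₁ := le_trans hPle (min_le_left _ _)
    linarith
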